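/- Let T be any one of the sets (−1/2, −1/4) ∪ (1/4, 1/2), (−1/4, 0) ∪ (1/4, 1/2), or (−1/2, −1/4) ∪ (0, 1/4). Then every T-avoiding spherical 7-design C ⊆ S^{15} ⊆ ℝ^{16} satisfies |C| ≥ 4320. -/

import Mathlib

open scoped Classical
open MeasureTheory Finset


/-- `C` is a spherical `τ`-design on the unit sphere `S^{n-1} ⊆ ℝ^n`: every polynomial in
`n` variables of total degree at most `τ` has the same average over `C` as over the sphere
with its normalized surface measure. -/
def SphericalDesign (n τ : ℕ) (C : Finset (EuclideanSpace ℝ (Fin n))) : Prop :=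
  ∀ p : MvPolynomial (Fin n) ℝ, p.totalDegree ≤ τ →
    (∑ x ∈ C, MvPolynomial.eval (fun i => x i) p) / (C.card : ℝ) =
      ⨍ x, MvPolynomial.eval (fun i => (x : EuclideanSpace ℝ (Fin n)) i) p
        ∂((volume : Measure (EuclideanSpace ℝ (Fin n))).toSphere)

open Metric
open scoped Pointwise

noncomputable section
local notation "E16" => EuclideanSpace ℝ (Fin 16)
local notation "Sph" => Metric.sphere (0 : EuclideanSpace ℝ (Fin 16)) 1

noncomputable def sigS : Measure ↥(Metric.sphere (0 : EuclideanSpace ℝ (Fin 16)) 1) :=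
  (volume : Measure (EuclideanSpace ℝ (Fin 16))).toSphere

instance : IsFiniteMeasure sigS := by unfold sigS; infer_instance

lemma cint {g : ↥Sph → ℝ} (hg : Continuous g) : Integrable g sigS :=
  hg.integrable_of_hasCompactSupport
    (isCompact_univ.of_isClosed_subset (isClosed_tsupport g) (Set.subset_univ _))

lemma cX (i : Fin 16) : Continuous fun x : ↥Sph => (x : E16) i := by
  exact (continuous_apply i).comp ((PiLp.continuous_ofLp _ _).comp continuous_subtype_val)

lemma sigS_univ_pos : 0 < (sigS Set.univ).toReal := by
  rw [sigS, Measure.toSphere_apply_univ]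
  have h1 : (0:ENNReal) < volume (ball (0:E16) 1) := measure_ball_pos _ _ one_pos
  have h2 : volume (ball (0:E16) 1) < ⊤ := measure_ball_lt_top
  have : (0:ENNReal) < ↑(Module.finrank ℝ (EuclideanSpace ℝ (Fin 16))) * volume (ball (0:E16) 1) := by
    apply ENNReal.mul_pos _ h1.ne'
    simp [finrank_euclideanSpace]
  exact ENNReal.toReal_pos this.ne' (ENNReal.mul_lt_top (by simp) h2).ne

instance : NeZero sigS := by
  constructor
  intro h
  have := sigS_univ_pos
  rw [h] at this
  simp at this

lemma norm_one_sum (x : ↥Sph) : ∑ i : Fin 16, ((x : E16) i)^2 = 1 := by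
  have hx : ‖(x : E16)‖ = 1 := mem_sphere_zero_iff_norm.mp x.2
  have := EuclideanSpace.norm_eq (x : E16)
  rw [hx] at this
  have h2 : (1:ℝ) = ∑ i : Fin 16, ‖(x : E16) i‖^2 := by
    have := congrArg (fun t : ℝ => t^2) this
    simpa [Real.sq_sqrt (Finset.sum_nonneg fun i _ => sq_nonneg _)] using this
  simpa [Real.norm_eq_abs, sq_abs] using h2.symm

def rsph (R : E16 ≃ₗᵢ[ℝ] E16) (x : Sph) : Sph :=
  ⟨R x, by
    have hx : ‖(x : E16)‖ = 1 := mem_sphere_zero_iff_norm.mp x.2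
    simp [mem_sphere_zero_iff_norm, hx]⟩

lemma continuous_rsph (R : E16 ≃ₗᵢ[ℝ] E16) : Continuous (rsph R) :=
  Continuous.subtype_mk (R.continuous.comp continuous_subtype_val) _

lemma map_rsph (R : E16 ≃ₗᵢ[ℝ] E16) : Measure.map (rsph R) sigS = sigS := by
  ext s hs
  rw [Measure.map_apply (continuous_rsph R).measurable hs]
  have hs' : MeasurableSet (rsph R ⁻¹' s) := (continuous_rsph R).measurable hs
  rw [sigS, Measure.toSphere_apply' _ hs', Measure.toSphere_apply' _ hs]
  congr 1
  have himg : (Subtype.val '' (rsph R ⁻¹' s)) = R.symm '' (Subtype.val '' s) := by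
    ext z
    constructor
    · rintro ⟨x, hx, rfl⟩
      exact ⟨R x, ⟨rsph R x, hx, rfl⟩, by simp [rsph]⟩
    · rintro ⟨w, ⟨u, hu, rfl⟩, rfl⟩
      refine ⟨rsph R.symm u, ?_, rfl⟩
      show rsph R (rsph R.symm u) ∈ s
      have : rsph R (rsph R.symm u) = u := by
        apply Subtype.ext
        show R (R.symm u) = u
        simp
      rw [this]; exact hu
  rw [himg]
  have hsmul : Set.Ioo (0:ℝ) 1 • (R.symm '' (Subtype.val '' s))
      = R.symm '' (Set.Ioo (0:ℝ) 1 • (Subtype.val '' s)) := by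
    rw [← Set.image2_smul, ← Set.image2_smul, Set.image2_image_right, Set.image_image2]
    exact Set.image2_congr fun a _ b _ => (R.symm.map_smul a b).symm
  rw [hsmul]
  have hpre : R.symm '' (Set.Ioo (0:ℝ) 1 • (Subtype.val '' s))
      = ⇑R ⁻¹' (Set.Ioo (0:ℝ) 1 • (Subtype.val '' s)) := by
    ext z
    constructor
    · rintro ⟨w, hw, rfl⟩; simpa using hw
    · intro hz; exact ⟨R z, hz, by simp⟩
  rw [hpre]
  have hmp := R.measurePreserving
  calc volume (⇑R ⁻¹' (Set.Ioo (0:ℝ) 1 • (Subtype.val '' s)))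
      = Measure.map (⇑R.toHomeomorph.toMeasurableEquiv) volume
          (Set.Ioo (0:ℝ) 1 • (Subtype.val '' s)) := by
        rw [MeasurableEquiv.map_apply]; rfl
    _ = volume (Set.Ioo (0:ℝ) 1 • (Subtype.val '' s)) := by
        rw [show ⇑R.toHomeomorph.toMeasurableEquiv = ⇑R from rfl, hmp.map_eq]

lemma integral_rsph (R : E16 ≃ₗᵢ[ℝ] E16) (g : Sph → ℝ) (hg : Continuous g) :
    ∫ x, g (rsph R x) ∂sigS = ∫ x, g x ∂sigS := by
  conv_rhs => rw [← map_rsph R]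
  rw [integral_map (continuous_rsph R).measurable.aemeasurable hg.aestronglyMeasurable]

/-- moment transfer: for any unit vector y -/
lemma moment_eq {y : E16} (hy : ‖y‖ = 1) (k : ℕ) :
    ∫ x, ((inner ℝ (x : E16) y : ℝ))^k ∂sigS = ∫ x, ((x : E16) 0)^k ∂sigS := by
  have hv : Orthonormal ℝ (Set.restrict {0} (fun _ : Fin 16 => y)) := by
    constructor
    · intro i; exact hy
    · intro i j hij
      exact absurd (Subtype.ext ((i.2 : i.1 ∈ ({0}:Set (Fin 16))).trans
        ((j.2 : j.1 ∈ ({0}:Set (Fin 16))) : j.1 = 0).symm)) hij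
  obtain ⟨b, hb⟩ := hv.exists_orthonormalBasis_extension_of_card_eq
    (by simp [finrank_euclideanSpace])
  have hb0 : b 0 = y := hb 0 rfl
  set R := b.repr.symm with hR
  have key : ∀ u : ↥Sph, ((inner ℝ ((R (u : E16)) : E16) y : ℝ)) = (u : E16) 0 := by
    intro u
    rw [real_inner_comm, ← hb0, ← OrthonormalBasis.repr_apply_apply]
    simp [hR]
  have h1 := integral_rsph R (fun x => ((inner ℝ (x : E16) y : ℝ))^k)
    (by exact (Continuous.inner continuous_subtype_val continuous_const).pow k)
  rw [← h1]
  have : ∀ x : ↥Sph, ((inner ℝ ((rsph R x : ↥Sph) : E16) y : ℝ))^k = ((x : E16) 0)^k := by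
    intro x
    rw [show ((rsph R x : ↥Sph) : E16) = R (x : E16) from rfl, key x]
  simp only [this]

-- coordinate sign flip
def flipI (j : Fin 16) : E16 ≃ₗᵢ[ℝ] E16 :=
  LinearIsometryEquiv.piLpCongrRight 2
    (fun i : Fin 16 => if i = j then LinearIsometryEquiv.neg ℝ else LinearIsometryEquiv.refl ℝ ℝ)

lemma flipI_self (j : Fin 16) (x : E16) : flipI j x j = -(x j) := by
  simp [flipI, LinearIsometryEquiv.piLpCongrRight_apply]

lemma flipI_ne (j i : Fin 16) (h : i ≠ j) (x : E16) : flipI j x i = x i := by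
  simp [flipI, LinearIsometryEquiv.piLpCongrRight_apply, h]

-- coordinate swap
def swapI (i j : Fin 16) : E16 ≃ₗᵢ[ℝ] E16 :=
  LinearIsometryEquiv.piLpCongrLeft 2 ℝ ℝ (Equiv.swap i j)

lemma swapI_apply (i j k : Fin 16) (x : E16) : swapI i j x k = x (Equiv.swap i j k) := by
  simp [swapI, LinearIsometryEquiv.piLpCongrLeft_apply, Equiv.piCongrLeft'_apply, Equiv.symm_swap]

lemma odd_vanish {i j : Fin 16} (hij : i ≠ j) (a b : ℕ) (hb : Odd b) :
    ∫ x, ((x : E16) i)^a * ((x : E16) j)^b ∂sigS = 0 := by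
  have h := integral_rsph (flipI j) (fun x => ((x : E16) i)^a * ((x : E16) j)^b)
    (((cX i).pow a).mul ((cX j).pow b))
  have hpt : ∀ x : ↥Sph, (((rsph (flipI j) x : ↥Sph) : E16) i)^a * (((rsph (flipI j) x : ↥Sph) : E16) j)^b
      = -(((x : E16) i)^a * ((x : E16) j)^b) := by
    intro x
    have h1 : ((rsph (flipI j) x : ↥Sph) : E16) i = (x : E16) i := flipI_ne j i hij _
    have h2 : ((rsph (flipI j) x : ↥Sph) : E16) j = -((x : E16) j) := flipI_self j _
    rw [h1, h2, hb.neg_pow]; ring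
  simp only [hpt] at h
  rw [integral_neg] at h
  linarith

lemma odd_vanish0 (k : ℕ) (hk : Odd k) : ∫ x, ((x : E16) 0)^k ∂sigS = 0 := by
  have h := integral_rsph (flipI 0) (fun x => ((x : E16) 0)^k) ((cX 0).pow k)
  have hpt : ∀ x : ↥Sph, (((rsph (flipI 0) x : ↥Sph) : E16) 0)^k = -(((x : E16) 0)^k) := by
    intro x
    rw [show ((rsph (flipI 0) x : ↥Sph) : E16) 0 = -((x : E16) 0) from flipI_self 0 _, hk.neg_pow]
  simp only [hpt] at h
  rw [integral_neg] at h
  linarith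

lemma swap_moment {i : Fin 16} (hi : i ≠ 0) (a b : ℕ) :
    ∫ x, ((x : E16) 0)^a * ((x : E16) i)^b ∂sigS
      = ∫ x, ((x : E16) 0)^b * ((x : E16) i)^a ∂sigS := by
  have h := integral_rsph (swapI 0 i) (fun x => ((x : E16) 0)^a * ((x : E16) i)^b)
    (((cX 0).pow a).mul ((cX i).pow b))
  have hpt : ∀ x : ↥Sph, (((rsph (swapI 0 i) x : ↥Sph) : E16) 0)^a * (((rsph (swapI 0 i) x : ↥Sph) : E16) i)^b
      = ((x : E16) 0)^b * ((x : E16) i)^a := by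
    intro x
    have h1 : ((rsph (swapI 0 i) x : ↥Sph) : E16) 0 = (x : E16) i := by
      rw [show ((rsph (swapI 0 i) x : ↥Sph) : E16) 0 = (x : E16) (Equiv.swap 0 i 0) from swapI_apply _ _ _ _,
        Equiv.swap_apply_left]
    have h2 : ((rsph (swapI 0 i) x : ↥Sph) : E16) i = (x : E16) 0 := by
      rw [show ((rsph (swapI 0 i) x : ↥Sph) : E16) i = (x : E16) (Equiv.swap 0 i i) from swapI_apply _ _ _ _,
        Equiv.swap_apply_right]
    rw [h1, h2]; ring
  simp only [hpt] at h
  exact h.symm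

lemma single_moment (i : Fin 16) (k : ℕ) :
    ∫ x, ((x : E16) i)^k ∂sigS = ∫ x, ((x : E16) 0)^k ∂sigS := by
  have hy : ‖EuclideanSpace.single i (1:ℝ)‖ = 1 := by
    rw [EuclideanSpace.norm_single]; norm_num
  have h := moment_eq hy k
  have hpt : ∀ x : ↥Sph, ((inner ℝ (x : E16) (EuclideanSpace.single i (1:ℝ)) : ℝ)) = (x : E16) i := by
    intro x
    rw [EuclideanSpace.inner_single_right]
    simp
  simp only [hpt] at h
  exact h

-- the diagonal unit vector in coordinates 0 and i
def diagv (i : Fin 16) : E16 :=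
  (Real.sqrt 2 / 2) • (EuclideanSpace.single 0 (1:ℝ) + EuclideanSpace.single i 1)

lemma diagv_norm {i : Fin 16} (hi : i ≠ 0) : ‖diagv i‖ = 1 := by
  have hinner : (inner ℝ (EuclideanSpace.single 0 (1:ℝ)) (EuclideanSpace.single i (1:ℝ)) : ℝ) = 0 := by
    rw [EuclideanSpace.inner_single_right]
    simp [EuclideanSpace.single_apply, hi]
  have hinner' : (inner ℝ (EuclideanSpace.single i (1:ℝ)) (EuclideanSpace.single 0 (1:ℝ)) : ℝ) = 0 := by
    rw [real_inner_comm]; exact hinner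
  have hsq : ‖EuclideanSpace.single 0 (1:ℝ) + EuclideanSpace.single i 1‖^2 = 2 := by
    rw [← real_inner_self_eq_norm_sq, inner_add_add_self, hinner, hinner']
    simp [real_inner_self_eq_norm_sq, EuclideanSpace.norm_single]
    norm_num
  have hnn : (0:ℝ) ≤ ‖EuclideanSpace.single 0 (1:ℝ) + EuclideanSpace.single i 1‖ := norm_nonneg _
  have hval : ‖EuclideanSpace.single 0 (1:ℝ) + EuclideanSpace.single i 1‖ = Real.sqrt 2 := by
    rw [← Real.sqrt_sq hnn, hsq]
  rw [diagv, norm_smul, hval]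
  rw [Real.norm_eq_abs, abs_of_nonneg (by positivity)]
  rw [div_mul_eq_mul_div, Real.mul_self_sqrt (by norm_num)]
  norm_num

lemma diagv_inner {i : Fin 16} (hi : i ≠ 0) (x : E16) :
    (inner ℝ x (diagv i) : ℝ) = (Real.sqrt 2 / 2) * (x 0 + x i) := by
  rw [diagv, real_inner_smul_right, inner_add_right,
    EuclideanSpace.inner_single_right, EuclideanSpace.inner_single_right]
  simp

lemma int5 {g1 g2 g3 g4 g5 : ↥Sph → ℝ} (h1 : Continuous g1) (h2 : Continuous g2)
    (h3 : Continuous g3) (h4 : Continuous g4) (h5 : Continuous g5) (c1 c2 c3 c4 c5 : ℝ) :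
    ∫ x, (c1 * g1 x + c2 * g2 x + c3 * g3 x + c4 * g4 x + c5 * g5 x) ∂sigS
      = c1 * ∫ x, g1 x ∂sigS + c2 * ∫ x, g2 x ∂sigS + c3 * ∫ x, g3 x ∂sigS
        + c4 * ∫ x, g4 x ∂sigS + c5 * ∫ x, g5 x ∂sigS := by
  have i1 := (cint h1).const_mul c1
  have i2 := (cint h2).const_mul c2
  have i3 := (cint h3).const_mul c3
  have i4 := (cint h4).const_mul c4
  have i5 := (cint h5).const_mul c5
  have i12 : Integrable (fun x => c1 * g1 x + c2 * g2 x) sigS := i1.add i2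
  have i13 : Integrable (fun x => c1 * g1 x + c2 * g2 x + c3 * g3 x) sigS := i12.add i3
  have i14 : Integrable (fun x => c1 * g1 x + c2 * g2 x + c3 * g3 x + c4 * g4 x) sigS := i13.add i4
  rw [integral_add i14 i5, integral_add i13 i4, integral_add i12 i3, integral_add i1 i2,
    integral_const_mul, integral_const_mul, integral_const_mul, integral_const_mul, integral_const_mul]

lemma int7 {g1 g2 g3 g4 g5 g6 g7 : ↥Sph → ℝ} (h1 : Continuous g1) (h2 : Continuous g2)
    (h3 : Continuous g3) (h4 : Continuous g4) (h5 : Continuous g5) (h6 : Continuous g6)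
    (h7 : Continuous g7) (c1 c2 c3 c4 c5 c6 c7 : ℝ) :
    ∫ x, (c1 * g1 x + c2 * g2 x + c3 * g3 x + c4 * g4 x + c5 * g5 x + c6 * g6 x + c7 * g7 x) ∂sigS
      = c1 * ∫ x, g1 x ∂sigS + c2 * ∫ x, g2 x ∂sigS + c3 * ∫ x, g3 x ∂sigS
        + c4 * ∫ x, g4 x ∂sigS + c5 * ∫ x, g5 x ∂sigS + c6 * ∫ x, g6 x ∂sigS
        + c7 * ∫ x, g7 x ∂sigS := by
  have i1 := (cint h1).const_mul c1
  have i2 := (cint h2).const_mul c2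
  have i3 := (cint h3).const_mul c3
  have i4 := (cint h4).const_mul c4
  have i5 := (cint h5).const_mul c5
  have i6 := (cint h6).const_mul c6
  have i7 := (cint h7).const_mul c7
  have i12 : Integrable (fun x => c1 * g1 x + c2 * g2 x) sigS := i1.add i2
  have i13 : Integrable (fun x => c1 * g1 x + c2 * g2 x + c3 * g3 x) sigS := i12.add i3
  have i14 : Integrable (fun x => c1 * g1 x + c2 * g2 x + c3 * g3 x + c4 * g4 x) sigS := i13.add i4
  have i15 : Integrable (fun x => c1 * g1 x + c2 * g2 x + c3 * g3 x + c4 * g4 x + c5 * g5 x) sigS := i14.add i5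
  have i16 : Integrable (fun x => c1 * g1 x + c2 * g2 x + c3 * g3 x + c4 * g4 x + c5 * g5 x + c6 * g6 x) sigS := i15.add i6
  rw [integral_add i16 i7, integral_add i15 i6, integral_add i14 i5, integral_add i13 i4,
    integral_add i12 i3, integral_add i1 i2,
    integral_const_mul, integral_const_mul, integral_const_mul, integral_const_mul,
    integral_const_mul, integral_const_mul, integral_const_mul]

lemma sqrt2_pow4 : (Real.sqrt 2 / 2)^4 = 1/4 := by
  have h : (Real.sqrt 2)^2 = 2 := Real.sq_sqrt (by norm_num)
  have : (Real.sqrt 2 / 2)^4 = ((Real.sqrt 2)^2)^2 / 16 := by ring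
  rw [this, h]; norm_num

lemma sqrt2_pow6 : (Real.sqrt 2 / 2)^6 = 1/8 := by
  have h : (Real.sqrt 2)^2 = 2 := Real.sq_sqrt (by norm_num)
  have : (Real.sqrt 2 / 2)^6 = ((Real.sqrt 2)^2)^3 / 64 := by ring
  rw [this, h]; norm_num

lemma key4 {i : Fin 16} (hi : i ≠ 0) :
    ∫ x, ((x : E16) 0)^2 * ((x : E16) i)^2 ∂sigS = (∫ x, ((x : E16) 0)^4 ∂sigS) / 3 := by
  have h := moment_eq (diagv_norm hi) 4
  have hpt : ∀ x : ↥Sph, ((inner ℝ (x : E16) (diagv i) : ℝ))^4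
      = (1/4) * (((x : E16) 0)^4) + 1 * (((x : E16) 0)^3 * ((x : E16) i)^1)
        + (3/2) * (((x : E16) 0)^2 * ((x : E16) i)^2)
        + 1 * (((x : E16) 0)^1 * ((x : E16) i)^3) + (1/4) * (((x : E16) i)^4) := by
    intro x
    rw [diagv_inner hi]
    have : (Real.sqrt 2 / 2 * ((x : E16) 0 + (x : E16) i))^4
        = (Real.sqrt 2 / 2)^4 * ((x : E16) 0 + (x : E16) i)^4 := by ring
    rw [this, sqrt2_pow4]; ring
  simp only [hpt] at h
  rw [int5 ((cX 0).fun_pow 4) (((cX 0).fun_pow 3).fun_mul ((cX i).fun_pow 1))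
    (((cX 0).fun_pow 2).fun_mul ((cX i).fun_pow 2)) (((cX 0).fun_pow 1).fun_mul ((cX i).fun_pow 3)) ((cX i).fun_pow 4)] at h
  rw [odd_vanish hi.symm 3 1 (by decide), odd_vanish hi.symm 1 3 (by decide),
    single_moment i 4] at h
  linarith

lemma key6 {i : Fin 16} (hi : i ≠ 0) :
    ∫ x, ((x : E16) 0)^4 * ((x : E16) i)^2 ∂sigS = (∫ x, ((x : E16) 0)^6 ∂sigS) / 5 := by
  have h := moment_eq (diagv_norm hi) 6
  have hpt : ∀ x : ↥Sph, ((inner ℝ (x : E16) (diagv i) : ℝ))^6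
      = (1/8) * (((x : E16) 0)^6) + (3/4) * (((x : E16) 0)^5 * ((x : E16) i)^1)
        + (15/8) * (((x : E16) 0)^4 * ((x : E16) i)^2)
        + (5/2) * (((x : E16) 0)^3 * ((x : E16) i)^3)
        + (15/8) * (((x : E16) 0)^2 * ((x : E16) i)^4)
        + (3/4) * (((x : E16) 0)^1 * ((x : E16) i)^5) + (1/8) * (((x : E16) i)^6) := by
    intro x
    rw [diagv_inner hi]
    have : (Real.sqrt 2 / 2 * ((x : E16) 0 + (x : E16) i))^6
        = (Real.sqrt 2 / 2)^6 * ((x : E16) 0 + (x : E16) i)^6 := by ring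
    rw [this, sqrt2_pow6]; ring
  simp only [hpt] at h
  rw [int7 ((cX 0).fun_pow 6) (((cX 0).fun_pow 5).fun_mul ((cX i).fun_pow 1))
    (((cX 0).fun_pow 4).fun_mul ((cX i).fun_pow 2)) (((cX 0).fun_pow 3).fun_mul ((cX i).fun_pow 3))
    (((cX 0).fun_pow 2).fun_mul ((cX i).fun_pow 4)) (((cX 0).fun_pow 1).fun_mul ((cX i).fun_pow 5))
    ((cX i).fun_pow 6)] at h
  rw [odd_vanish hi.symm 5 1 (by decide), odd_vanish hi.symm 3 3 (by decide),
    odd_vanish hi.symm 1 5 (by decide), single_moment i 6, swap_moment hi 2 4] at h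
  linarith

lemma split_moment (a : ℕ) :
    ∫ x, ((x : E16) 0)^a ∂sigS
      = ∫ x, ((x : E16) 0)^(a+2) ∂sigS
        + ∑ i ∈ ({0}ᶜ : Finset (Fin 16)), ∫ x, ((x : E16) 0)^a * ((x : E16) i)^2 ∂sigS := by
  have h1 : ∫ x, ((x : E16) 0)^a ∂sigS
      = ∫ x, ∑ i : Fin 16, ((x : E16) 0)^a * ((x : E16) i)^2 ∂sigS := by
    apply integral_congr_ae
    filter_upwards with x
    rw [← Finset.mul_sum, norm_one_sum, mul_one]
  rw [h1, integral_finset_sum _ (fun i _ => cint (((cX 0).fun_pow a).fun_mul ((cX i).fun_pow 2)))]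
  rw [Fintype.sum_eq_add_sum_compl 0]
  congr 1
  apply integral_congr_ae
  filter_upwards with x
  rw [← pow_add]

lemma card_compl0 : ({0}ᶜ : Finset (Fin 16)).card = 15 := by
  rw [Finset.card_compl]
  simp

lemma V_16m2 : ∫ x, (1:ℝ) ∂sigS = 16 * ∫ x, ((x : E16) 0)^2 ∂sigS := by
  have h1 : ∫ x, (1:ℝ) ∂sigS = ∫ x, ∑ i : Fin 16, ((x : E16) i)^2 ∂sigS := by
    apply integral_congr_ae
    filter_upwards with x
    rw [norm_one_sum]
  rw [h1, integral_finset_sum _ (fun i _ => cint ((cX i).fun_pow 2))]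
  rw [Finset.sum_congr rfl (fun i _ => single_moment i 2)]
  simp [Finset.sum_const]

lemma m2_6m4 : ∫ x, ((x : E16) 0)^2 ∂sigS = 6 * ∫ x, ((x : E16) 0)^4 ∂sigS := by
  have h := split_moment 2
  rw [Finset.sum_congr rfl (fun i hi => key4 (by simpa using hi))] at h
  rw [Finset.sum_const, card_compl0] at h
  norm_num at h
  linarith

lemma m4_4m6 : ∫ x, ((x : E16) 0)^4 ∂sigS = 4 * ∫ x, ((x : E16) 0)^6 ∂sigS := by
  have h := split_moment 4
  rw [Finset.sum_congr rfl (fun i hi => key6 (by simpa using hi))] at h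
  rw [Finset.sum_const, card_compl0] at h
  norm_num at h
  linarith

def polyA (a : ℕ → ℝ) (y : E16) : MvPolynomial (Fin 16) ℝ :=
  ∑ k ∈ Finset.range 8,
    MvPolynomial.C (a k) * (∑ i : Fin 16, MvPolynomial.C (y i) * MvPolynomial.X i)^k

lemma polyA_totalDegree (a : ℕ → ℝ) (y : E16) : (polyA a y).totalDegree ≤ 7 := by
  refine le_trans (MvPolynomial.totalDegree_finset_sum _ _) (Finset.sup_le fun k hk => ?_)
  refine le_trans (MvPolynomial.totalDegree_mul _ _) ?_
  rw [MvPolynomial.totalDegree_C, zero_add]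
  refine le_trans (MvPolynomial.totalDegree_pow _ _) ?_
  have hL : (∑ i : Fin 16, MvPolynomial.C (y i) * MvPolynomial.X i).totalDegree ≤ 1 := by
    refine le_trans (MvPolynomial.totalDegree_finset_sum _ _) (Finset.sup_le fun i _ => ?_)
    refine le_trans (MvPolynomial.totalDegree_mul _ _) ?_
    rw [MvPolynomial.totalDegree_C, zero_add, MvPolynomial.totalDegree_X]
  calc k * (∑ i : Fin 16, MvPolynomial.C (y i) * MvPolynomial.X i).totalDegree
      ≤ k * 1 := Nat.mul_le_mul_left k hL
    _ = k := Nat.mul_one k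
    _ ≤ 7 := Nat.lt_succ_iff.mp (Finset.mem_range.mp hk)

lemma polyA_eval (a : ℕ → ℝ) (y : E16) (v : Fin 16 → ℝ) :
    MvPolynomial.eval v (polyA a y) = ∑ k ∈ Finset.range 8, a k * (∑ i : Fin 16, y i * v i)^k := by
  simp [polyA]

lemma inner_sum_form (x y : E16) : (inner ℝ x y : ℝ) = ∑ i : Fin 16, y i * x i := by
  rw [real_inner_comm]
  simp [PiLp.inner_apply, RCLike.inner_apply, mul_comm]

lemma avg_poly (a : ℕ → ℝ) {y : E16} (hy : ‖y‖ = 1) :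
    ⨍ x, MvPolynomial.eval (fun i => (x : E16) i) (polyA a y) ∂sigS
      = a 0 + a 2/16 + a 4/96 + a 6/384 := by
  set V := ∫ x, (1:ℝ) ∂sigS with hVdef
  have hVeq : V = (sigS Set.univ).toReal := by
    rw [hVdef, integral_const, smul_eq_mul, mul_one, Measure.real]
  have hVpos : 0 < V := hVeq ▸ sigS_univ_pos
  have hm0 : ∫ x, ((x : E16) 0)^(0:ℕ) ∂sigS = V := by
    rw [hVdef]; simp
  have hm1 : ∫ x, ((x : E16) 0)^(1:ℕ) ∂sigS = 0 := odd_vanish0 1 (by decide)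
  have hm3 : ∫ x, ((x : E16) 0)^(3:ℕ) ∂sigS = 0 := odd_vanish0 3 (by decide)
  have hm5 : ∫ x, ((x : E16) 0)^(5:ℕ) ∂sigS = 0 := odd_vanish0 5 (by decide)
  have hm7 : ∫ x, ((x : E16) 0)^(7:ℕ) ∂sigS = 0 := odd_vanish0 7 (by decide)
  have hm2 : ∫ x, ((x : E16) 0)^(2:ℕ) ∂sigS = V/16 := by
    have := V_16m2; rw [← hVdef] at this; linarith
  have hm4 : ∫ x, ((x : E16) 0)^(4:ℕ) ∂sigS = V/96 := by
    have h1 := m2_6m4; linarith [hm2]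
  have hm6 : ∫ x, ((x : E16) 0)^(6:ℕ) ∂sigS = V/384 := by
    have h1 := m4_4m6; linarith [hm4]
  have hpt : (fun x : ↥Sph => MvPolynomial.eval (fun i => (x : E16) i) (polyA a y))
      =ᵐ[sigS] fun x : ↥Sph => ∑ k ∈ Finset.range 8, a k * ((inner ℝ ((x:↥Sph) : E16) y : ℝ))^k := by
    filter_upwards with x
    rw [polyA_eval]
    exact Finset.sum_congr rfl fun k _ => by rw [← inner_sum_form]
  rw [average_eq, Measure.real, integral_congr_ae hpt,
    integral_finset_sum _ (fun k _ =>
      (cint ((Continuous.inner continuous_subtype_val continuous_const).fun_pow k)).const_mul _)]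
  rw [Finset.sum_congr rfl (fun k _ => by rw [integral_const_mul, moment_eq hy k])]
  rw [show (8:ℕ) = 7+1 from rfl, Finset.sum_range_succ, Finset.sum_range_succ,
    Finset.sum_range_succ, Finset.sum_range_succ, Finset.sum_range_succ, Finset.sum_range_succ,
    Finset.sum_range_succ, Finset.sum_range_succ, Finset.sum_range_zero]
  rw [hm0, hm1, hm2, hm3, hm4, hm5, hm6, hm7, ← hVeq, smul_eq_mul]
  field_simp
  ring

lemma card_pos_of_design (C : Finset E16) (hdes : SphericalDesign 16 7 C) : 0 < C.card := by
  rcases Nat.eq_zero_or_pos C.card with h | h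
  · exfalso
    have h1 := hdes 1 (by simp)
    have hC : C = ∅ := Finset.card_eq_zero.mp h
    rw [hC] at h1
    simp only [Finset.sum_empty, zero_div] at h1
    have h2 : ⨍ x, MvPolynomial.eval (fun i => (x : E16) i) (1 : MvPolynomial (Fin 16) ℝ)
        ∂((volume : Measure E16).toSphere) = 1 := by
      have : ∀ x : ↥Sph, MvPolynomial.eval (fun i => (x : E16) i) (1 : MvPolynomial (Fin 16) ℝ)
          = 1 := fun x => map_one _
      calc ⨍ x, MvPolynomial.eval (fun i => (x : E16) i) (1 : MvPolynomial (Fin 16) ℝ) ∂sigS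
          = ⨍ _x, (1:ℝ) ∂sigS := by
            exact average_congr (Filter.Eventually.of_forall this)
        _ = 1 := average_const _ _
    rw [h2] at h1
    norm_num at h1
  · exact h

lemma main_bound (a : ℕ → ℝ) (T : Set ℝ)
    (C : Finset E16) (hC : ∀ x ∈ C, ‖x‖ = 1)
    (hdes : SphericalDesign 16 7 C)
    (havoid : ∀ x ∈ C, ∀ y ∈ C, x ≠ y → (inner ℝ x y : ℝ) ∉ T)
    (hpos : ∀ t : ℝ, -1 ≤ t → t ≤ 1 → t ∉ T → 0 ≤ ∑ k ∈ Finset.range 8, a k * t^k)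
    (hApos : 0 < a 0 + a 2/16 + a 4/96 + a 6/384)
    (hratio : 4320 * (a 0 + a 2/16 + a 4/96 + a 6/384) ≤ ∑ k ∈ Finset.range 8, a k) :
    4320 ≤ C.card := by
  set A := a 0 + a 2/16 + a 4/96 + a 6/384 with hA
  have hcard := card_pos_of_design C hdes
  have hn : (0:ℝ) < (C.card : ℝ) := by exact_mod_cast hcard
  obtain ⟨y, hyC⟩ := Finset.card_pos.mp hcard
  have hy : ‖y‖ = 1 := hC y hyC
  -- design identity for polyA a y
  have hone : (∑ x ∈ C, MvPolynomial.eval (fun i => x i) (polyA a y)) / (C.card : ℝ) = A := by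
    rw [hA, ← avg_poly a hy]
    exact hdes (polyA a y) (polyA_totalDegree a y)
  have hsum : ∑ x ∈ C, MvPolynomial.eval (fun i => x i) (polyA a y) = (C.card : ℝ) * A := by
    field_simp at hone
    linarith
  -- lower bound for the sum
  have hyy : MvPolynomial.eval (fun i => y i) (polyA a y) = ∑ k ∈ Finset.range 8, a k := by
    rw [polyA_eval]
    have h1 : ∑ i : Fin 16, y i * y i = 1 := by
      rw [← inner_sum_form y y, real_inner_self_eq_norm_sq, hy]
      norm_num
    rw [h1]
    simp
  have hoff : ∀ x ∈ C.erase y, 0 ≤ MvPolynomial.eval (fun i => x i) (polyA a y) := by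
    intro x hx
    obtain ⟨hxy, hxC⟩ := Finset.mem_erase.mp hx
    rw [polyA_eval]
    have hix : ∑ i : Fin 16, y i * x i = (inner ℝ x y : ℝ) := (inner_sum_form x y).symm
    rw [hix]
    have habs : |(inner ℝ x y : ℝ)| ≤ 1 := by
      have := abs_real_inner_le_norm x y
      rw [hC x hxC, hy] at this
      linarith
    exact hpos _ (neg_le_of_abs_le habs) (le_of_abs_le habs)
      (havoid x hxC y hyC hxy)
  have hlow : (∑ k ∈ Finset.range 8, a k) ≤ ∑ x ∈ C, MvPolynomial.eval (fun i => x i) (polyA a y) := by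
    rw [← Finset.add_sum_erase C _ hyC, hyy]
    have := Finset.sum_nonneg hoff
    linarith
  -- conclude
  have hfinal : (4320:ℝ) ≤ (C.card : ℝ) := by
    rw [hsum] at hlow
    have h1 : 4320 * A ≤ (C.card : ℝ) * A := le_trans hratio hlow
    exact le_of_mul_le_mul_right (by linarith [mul_comm (4320:ℝ) A, mul_comm ((C.card:ℝ)) A]) hApos
  exact_mod_cast hfinal

def a1 : ℕ → ℝ
  | 2 => 1/64 | 3 => 1/64 | 4 => -5/16 | 5 => -5/16 | 6 => 1 | 7 => 1 | _ => 0

def a2 : ℕ → ℝ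
  | 1 => 1/128 | 2 => 3/128 | 3 => -9/64 | 4 => -15/32 | 5 => 3/16 | 6 => 3/2 | 7 => 1 | _ => 0

def a3 : ℕ → ℝ
  | 1 => -1/128 | 2 => 1/128 | 3 => 11/64 | 4 => -5/32 | 5 => -13/16 | 6 => 1/2 | 7 => 1 | _ => 0

lemma pos1 (t : ℝ) (h1 : -1 ≤ t) (h2 : t ≤ 1)
    (hT : t ∉ (Set.Ioo (-1/2 : ℝ) (-1/4) ∪ Set.Ioo (1/4 : ℝ) (1/2))) :
    0 ≤ ∑ k ∈ Finset.range 8, a1 k * t^k := by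
  have key : ∑ k ∈ Finset.range 8, a1 k * t^k
      = (t+1) * ((t+1/2)*(t+1/4)) * t^2 * ((t-1/4)*(t-1/2)) := by
    simp [Finset.sum_range_succ, a1]
    ring
  rw [key]
  simp only [Set.mem_union, Set.mem_Ioo, not_or, not_and_or, not_lt] at hT
  obtain ⟨hc1, hc2⟩ := hT
  have hg1 : 0 ≤ t + 1 := by linarith
  have hg3 : 0 ≤ t^2 := sq_nonneg t
  rcases hc1 with hl | hl <;> rcases hc2 with hr | hr
  · -- t ≤ -1/2, t ≤ 1/4
    have hg2 : 0 ≤ (t+1/2)*(t+1/4) := by nlinarith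
    have hg4 : 0 ≤ (t-1/4)*(t-1/2) := by nlinarith
    exact mul_nonneg (mul_nonneg (mul_nonneg hg1 hg2) hg3) hg4
  · linarith
  · have hg2 : 0 ≤ (t+1/2)*(t+1/4) := by nlinarith
    have hg4 : 0 ≤ (t-1/4)*(t-1/2) := by nlinarith
    exact mul_nonneg (mul_nonneg (mul_nonneg hg1 hg2) hg3) hg4
  · have hg2 : 0 ≤ (t+1/2)*(t+1/4) := by nlinarith
    have hg4 : 0 ≤ (t-1/4)*(t-1/2) := by nlinarith
    exact mul_nonneg (mul_nonneg (mul_nonneg hg1 hg2) hg3) hg4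

lemma pos2 (t : ℝ) (h1 : -1 ≤ t) (h2 : t ≤ 1)
    (hT : t ∉ (Set.Ioo (-1/4 : ℝ) 0 ∪ Set.Ioo (1/4 : ℝ) (1/2))) :
    0 ≤ ∑ k ∈ Finset.range 8, a2 k * t^k := by
  have key : ∑ k ∈ Finset.range 8, a2 k * t^k
      = (t+1) * (t+1/2)^2 * ((t+1/4)*t) * ((t-1/4)*(t-1/2)) := by
    simp [Finset.sum_range_succ, a2]
    ring
  rw [key]
  simp only [Set.mem_union, Set.mem_Ioo, not_or, not_and_or, not_lt] at hT
  obtain ⟨hc1, hc2⟩ := hT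
  have hg1 : 0 ≤ t + 1 := by linarith
  have hgs : 0 ≤ (t+1/2)^2 := sq_nonneg _
  rcases hc1 with hl | hl <;> rcases hc2 with hr | hr
  · -- t ≤ -1/4 (so t ≤ 1/4 consistent)
    have hg3 : 0 ≤ (t+1/4)*t := by nlinarith
    have hg4 : 0 ≤ (t-1/4)*(t-1/2) := by nlinarith
    exact mul_nonneg (mul_nonneg (mul_nonneg hg1 hgs) hg3) hg4
  · linarith
  · have hg3 : 0 ≤ (t+1/4)*t := by nlinarith
    have hg4 : 0 ≤ (t-1/4)*(t-1/2) := by nlinarith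
    exact mul_nonneg (mul_nonneg (mul_nonneg hg1 hgs) hg3) hg4
  · have hg3 : 0 ≤ (t+1/4)*t := by nlinarith
    have hg4 : 0 ≤ (t-1/4)*(t-1/2) := by nlinarith
    exact mul_nonneg (mul_nonneg (mul_nonneg hg1 hgs) hg3) hg4

lemma pos3 (t : ℝ) (h1 : -1 ≤ t) (h2 : t ≤ 1)
    (hT : t ∉ (Set.Ioo (-1/2 : ℝ) (-1/4) ∪ Set.Ioo (0 : ℝ) (1/4))) :
    0 ≤ ∑ k ∈ Finset.range 8, a3 k * t^k := by
  have key : ∑ k ∈ Finset.range 8, a3 k * t^k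
      = (t+1) * ((t+1/2)*(t+1/4)) * (t*(t-1/4)) * (t-1/2)^2 := by
    simp [Finset.sum_range_succ, a3]
    ring
  rw [key]
  simp only [Set.mem_union, Set.mem_Ioo, not_or, not_and_or, not_lt] at hT
  obtain ⟨hc1, hc2⟩ := hT
  have hg1 : 0 ≤ t + 1 := by linarith
  have hgs : 0 ≤ (t-1/2)^2 := sq_nonneg _
  rcases hc1 with hl | hl <;> rcases hc2 with hr | hr
  · -- t ≤ -1/2, t ≤ 0
    have hg2 : 0 ≤ (t+1/2)*(t+1/4) := by nlinarith
    have hg3 : 0 ≤ t*(t-1/4) := by nlinarith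
    exact mul_nonneg (mul_nonneg (mul_nonneg hg1 hg2) hg3) hgs
  · linarith
  · have hg2 : 0 ≤ (t+1/2)*(t+1/4) := by nlinarith
    have hg3 : 0 ≤ t*(t-1/4) := by nlinarith
    exact mul_nonneg (mul_nonneg (mul_nonneg hg1 hg2) hg3) hgs
  · have hg2 : 0 ≤ (t+1/2)*(t+1/4) := by nlinarith
    have hg3 : 0 ≤ t*(t-1/4) := by nlinarith
    exact mul_nonneg (mul_nonneg (mul_nonneg hg1 hg2) hg3) hgs

theorem statement14 (T : Set ℝ)
    (hT : T = Set.Ioo (-1/2 : ℝ) (-1/4) ∪ Set.Ioo (1/4 : ℝ) (1/2) ∨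
      T = Set.Ioo (-1/4 : ℝ) 0 ∪ Set.Ioo (1/4 : ℝ) (1/2) ∨
      T = Set.Ioo (-1/2 : ℝ) (-1/4) ∪ Set.Ioo (0 : ℝ) (1/4))
    (C : Finset (EuclideanSpace ℝ (Fin 16))) (hC : ∀ x ∈ C, ‖x‖ = 1)
    (hdes : SphericalDesign 16 7 C)
    (havoid : ∀ x ∈ C, ∀ y ∈ C, x ≠ y → (inner ℝ x y : ℝ) ∉ T) :
    4320 ≤ C.card := by
  rcases hT with rfl | rfl | rfl
  · refine main_bound a1 _ C hC hdes havoid (fun t h1 h2 h3 => pos1 t h1 h2 h3) ?_ ?_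
    · norm_num [a1]
    · norm_num [Finset.sum_range_succ, a1]
  · refine main_bound a2 _ C hC hdes havoid (fun t h1 h2 h3 => pos2 t h1 h2 h3) ?_ ?_
    · norm_num [a2]
    · norm_num [Finset.sum_range_succ, a2]
  · refine main_bound a3 _ C hC hdes havoid (fun t h1 h2 h3 => pos3 t h1 h2 h3) ?_ ?_
    · norm_num [a3]
    · norm_num [Finset.sum_range_succ, a3]

end
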